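/- For each A in the list [[4,5],[3,1]], [[2,6],[1,4]], [[3,3],[6,4]] (matrices over ℤ/7), and for each g ∈ {(1,0), (0,1), (6,6)} ⊂ (ℤ/7)², the element A·g (matrix times column vector mod 7) is not a multiple of (1,0), (0,1) or (6,6). Consequently the diagonal action φ × (φ∘A) of (ℤ/7)² on F × F is free. -/

import Mathlib

/-! A point of the Fermat cone has at most one vanishing coordinate, so if `diagAct ζ g` fixes it
projectively, the eigenvalue equations force two of the exponents `0`, `g.1`, `g.2` to agree: `g`
lies on one of the lines spanned by `(1,0)`, `(0,1)`, `(6,6)`. A finite check shows that none of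
the three matrices maps a generator of one of these lines into another one, and by linearity the
same holds for every nonzero point of the lines, so no nonzero `g` fixes points on both factors. -/

def fermatCone : Set (Fin 3 → ℂ) :=
  {v | v ≠ 0 ∧ v 0 ^ 7 + v 1 ^ 7 + v 2 ^ 7 = 0}

noncomputable def diagAct (ζ : ℂ) (g : ZMod 7 × ZMod 7) (v : Fin 3 → ℂ) : Fin 3 → ℂ :=
  ![v 0, ζ ^ g.1.val * v 1, ζ ^ g.2.val * v 2]

def matVec (A : Matrix (Fin 2) (Fin 2) (ZMod 7)) (g : ZMod 7 × ZMod 7) :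
    ZMod 7 × ZMod 7 :=
  (A 0 0 * g.1 + A 0 1 * g.2, A 1 0 * g.1 + A 1 1 * g.2)

theorem IsPrimitiveRoot.eq_of_pow_val_eq {M : Type*} [CommMonoid M] {ζ : M} {n : ℕ} [NeZero n]
    (hζ : IsPrimitiveRoot ζ n) {a b : ZMod n} (h : ζ ^ a.val = ζ ^ b.val) : a = b :=
  ZMod.val_injective n (hζ.pow_inj a.val_lt b.val_lt h)

lemma fermatCone_coord_ne_zero {v : Fin 3 → ℂ} (hv : v ∈ fermatCone) {i j : Fin 3}
    (hij : i ≠ j) (hi : v i = 0) : v j ≠ 0 := by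
  intro hj
  obtain ⟨hv0, hF⟩ := hv
  refine hv0 (funext fun k => ?_)
  fin_cases i <;> fin_cases j <;> fin_cases k <;> simp_all

lemma diagAct_eq_smul_iff (ζ c : ℂ) (g : ZMod 7 × ZMod 7) (v : Fin 3 → ℂ) :
    diagAct ζ g v = c • v ↔
      v 0 = c * v 0 ∧ ζ ^ g.1.val * v 1 = c * v 1 ∧ ζ ^ g.2.val * v 2 = c * v 2 := by
  simp [diagAct, funext_iff, Fin.forall_fin_succ]

def lineGenerators : Set (ZMod 7 × ZMod 7) :=
  {(1, 0), (0, 1), (6, 6)}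

def specialLines : Set (ZMod 7 × ZMod 7) :=
  {g | ∃ c : ZMod 7, ∃ h ∈ lineGenerators, g = c • h}

lemma mem_specialLines {g : ZMod 7 × ZMod 7} (h : g.1 = 0 ∨ g.2 = 0 ∨ g.1 = g.2) :
    g ∈ specialLines := by
  rcases h with h | h | h
  · exact ⟨g.2, (0, 1), by simp [lineGenerators], by ext <;> simp [h]⟩
  · exact ⟨g.1, (1, 0), by simp [lineGenerators], by ext <;> simp [h]⟩
  · refine ⟨-g.1, (6, 6), by simp [lineGenerators], ?_⟩
    ext <;> simp [← h, show (6 : ZMod 7) = -1 from rfl]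

lemma mem_specialLines_of_diagAct_eq_smul {ζ : ℂ} (hζ : IsPrimitiveRoot ζ 7)
    {g : ZMod 7 × ZMod 7} {v : Fin 3 → ℂ} (hv : v ∈ fermatCone) {c : ℂ}
    (h : diagAct ζ g v = c • v) : g ∈ specialLines := by
  obtain ⟨h0, h1, h2⟩ := (diagAct_eq_smul_iff ζ c g v).1 h
  apply mem_specialLines
  by_cases hv0 : v 0 = 0
  · have p1 := mul_right_cancel₀ (fermatCone_coord_ne_zero hv (by decide) hv0 (j := 1)) h1
    have p2 := mul_right_cancel₀ (fermatCone_coord_ne_zero hv (by decide) hv0 (j := 2)) h2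
    exact Or.inr (Or.inr (hζ.eq_of_pow_val_eq (p1.trans p2.symm)))
  · have hc : c = 1 := (mul_left_eq_self₀.1 h0.symm).resolve_right hv0
    subst hc
    by_cases hv1 : v 1 = 0
    · have p2 := mul_right_cancel₀ (fermatCone_coord_ne_zero hv (by decide) hv1 (j := 2)) h2
      exact Or.inr (Or.inl (hζ.eq_of_pow_val_eq (by simpa using p2)))
    · exact Or.inl (hζ.eq_of_pow_val_eq (by simpa using mul_right_cancel₀ hv1 h1))

lemma matVec_smul (A : Matrix (Fin 2) (Fin 2) (ZMod 7)) (c : ZMod 7) (g : ZMod 7 × ZMod 7) :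
    matVec A (c • g) = c • matVec A g := by
  simp only [matVec, Prod.smul_mk, Prod.smul_fst, Prod.smul_snd, smul_eq_mul]
  ext <;> ring

def twistMatrices : Set (Matrix (Fin 2) (Fin 2) (ZMod 7)) :=
  {!![4, 5; 3, 1], !![2, 6; 1, 4], !![3, 3; 6, 4]}

lemma matVec_ne_smul {A : Matrix (Fin 2) (Fin 2) (ZMod 7)} (hA : A ∈ twistMatrices)
    {g : ZMod 7 × ZMod 7} (hg : g ∈ lineGenerators) {h : ZMod 7 × ZMod 7}
    (hh : h ∈ lineGenerators) (c : ZMod 7) : matVec A g ≠ c • h := by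
  simp only [twistMatrices, lineGenerators, Set.mem_insert_iff, Set.mem_singleton_iff]
    at hA hg hh
  rcases hA with rfl | rfl | rfl <;> rcases hg with rfl | rfl | rfl <;>
    rcases hh with rfl | rfl | rfl <;> revert c <;> decide

/-- For each `A` among `[[4,5],[3,1]]`, `[[2,6],[1,4]]`, `[[3,3],[6,4]]` (over `ℤ/7`) and
each `g ∈ {(1,0), (0,1), (6,6)}`, the vector `A·g` is not a multiple of `(1,0)`, `(0,1)`
or `(6,6)`.  Consequently the diagonal action `φ × (φ∘A)` of `(ℤ/7)²` on `F × F` is free: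
no nonzero element fixes (projectively) a point of `F` on the first factor via `φ(g)` and
simultaneously a point of `F` on the second factor via `φ(A·g)`. -/
theorem twisted_diagonal_action_free (ζ : ℂ) (hζ : IsPrimitiveRoot ζ 7) :
    (∀ A ∈ ({!![4, 5; 3, 1], !![2, 6; 1, 4], !![3, 3; 6, 4]} :
        Set (Matrix (Fin 2) (Fin 2) (ZMod 7))),
      ∀ g ∈ ({(1, 0), (0, 1), (6, 6)} : Set (ZMod 7 × ZMod 7)),
        ∀ h ∈ ({(1, 0), (0, 1), (6, 6)} : Set (ZMod 7 × ZMod 7)),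
          ∀ c : ZMod 7, matVec A g ≠ c • h) ∧
    (∀ A ∈ ({!![4, 5; 3, 1], !![2, 6; 1, 4], !![3, 3; 6, 4]} :
        Set (Matrix (Fin 2) (Fin 2) (ZMod 7))),
      ∀ g : ZMod 7 × ZMod 7, g ≠ 0 → ∀ v ∈ fermatCone, ∀ w ∈ fermatCone,
        ¬((∃ c : ℂ, c ≠ 0 ∧ diagAct ζ g v = c • v) ∧
          (∃ c : ℂ, c ≠ 0 ∧ diagAct ζ (matVec A g) w = c • w))) := by
  refine ⟨fun A hA g hg h hh c ↦ matVec_ne_smul hA hg hh c, ?_⟩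
  rintro A hA g hg v hv w hw ⟨⟨c, -, hv_fix⟩, ⟨d, -, hw_fix⟩⟩
  obtain ⟨k, q, hq, rfl⟩ := mem_specialLines_of_diagAct_eq_smul hζ hv hv_fix
  obtain ⟨m, q', hq', hm⟩ := mem_specialLines_of_diagAct_eq_smul hζ hw hw_fix
  have : Fact (Nat.Prime 7) := ⟨Nat.prime_seven⟩
  have hk : k ≠ 0 := by rintro rfl; exact hg (zero_smul _ q)
  refine matVec_ne_smul hA hq hq' (k⁻¹ * m) ?_
  rw [mul_smul, ← hm, matVec_smul, smul_smul, inv_mul_cancel₀ hk, one_smul]
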